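/- arXiv:2511.19499 — 2 statements merged into one kernel-verified Lean document; each statement's English description precedes it below -/
import Mathlib

section
/- (GAN value function upper bound) For any measurable discriminator D: X → (0,1), the GAN value V(D) = E_{x~p}[log D(x)] + E_{x~g}[log(1-D(x))] satisfies V(D) ≤ 2 D_JS(p ‖ g) - 2 log 2, with equality if and only if D(x) = p(x)/(p(x)+g(x)) for μ-almost every x. -/
/-!
Pointwise, with `s = p + g`, the gap between the integrands of `2 D_JS(p ‖ g) - 2 log 2` and of
`V(D)` is the sum of the two Bregman terms `p log (p / (s D)) - (p - s D)` and
`g log (g / (s (1 - D))) - (g - s (1 - D))`, i.e. the `klFun` divergence between `(p, g)` and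
`(s D, s (1 - D))`. It is nonnegative and vanishes exactly when `s D = p`. Integrating, the
bound holds, and equality of the integrals forces the nonnegative gap to vanish almost everywhere.
-/

open MeasureTheory Set Real InformationTheory

lemma mul_log_div_sub_sub_eq_mul_klFun (x : ℝ) {y : ℝ} (hy : y ≠ 0) :
    x * log (x / y) - (x - y) = y * klFun (x / y) := by
  rw [klFun_apply]
  field_simp
  ring

lemma mul_log_div_sub_sub_nonneg {x y : ℝ} (hx : 0 ≤ x) (hy : 0 < y) :
    0 ≤ x * log (x / y) - (x - y) := by
  rw [mul_log_div_sub_sub_eq_mul_klFun x hy.ne']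
  exact mul_nonneg hy.le (klFun_nonneg (div_nonneg hx hy.le))

lemma mul_log_div_sub_sub_eq_zero_iff {x y : ℝ} (hx : 0 ≤ x) (hy : 0 < y) :
    x * log (x / y) - (x - y) = 0 ↔ x = y := by
  rw [mul_log_div_sub_sub_eq_mul_klFun x hy.ne', mul_eq_zero,
    klFun_eq_zero_iff (div_nonneg hx hy.le), div_eq_one_iff_eq hy.ne']
  simp [hy.ne']

lemma mul_log_div_half_eq {s d : ℝ} (a : ℝ) (hs : s ≠ 0) (hd : d ≠ 0) :
    a * log (a / (s / 2)) = a * log (a / (s * d)) + a * log (2 * d) := by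
  rcases eq_or_ne a 0 with rfl | ha
  · simp
  rw [← mul_add, ← log_mul (by positivity) (by positivity)]
  congr 2
  field_simp

section JensenShannonIntegrand

variable {a b d : ℝ}

lemma js_integrand_sub_gan_integrand_eq (hs : a + b ≠ 0) (hd : d ∈ Ioo (0 : ℝ) 1) :
    a * log (a / ((a + b) / 2)) + b * log (b / ((a + b) / 2)) - (a + b) * log 2
        - (a * log d + b * log (1 - d)) =
      (a * log (a / ((a + b) * d)) - (a - (a + b) * d))
        + (b * log (b / ((a + b) * (1 - d))) - (b - (a + b) * (1 - d))) := by
  rw [mul_log_div_half_eq a hs hd.1.ne', mul_log_div_half_eq b hs (sub_pos.2 hd.2).ne',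
    log_mul two_ne_zero hd.1.ne', log_mul two_ne_zero (sub_pos.2 hd.2).ne']
  ring

lemma mul_log_add_mul_log_one_sub_le (ha : 0 ≤ a) (hb : 0 ≤ b) (hd : d ∈ Ioo (0 : ℝ) 1) :
    a * log d + b * log (1 - d) ≤
      a * log (a / ((a + b) / 2)) + b * log (b / ((a + b) / 2)) - (a + b) * log 2 := by
  rcases (add_nonneg ha hb).eq_or_lt with hs | hs
  · obtain ⟨rfl, rfl⟩ : a = 0 ∧ b = 0 := by constructor <;> linarith
    simp
  have hsd : 0 < (a + b) * d := mul_pos hs hd.1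
  have hsd' : 0 < (a + b) * (1 - d) := mul_pos hs (sub_pos.2 hd.2)
  have := js_integrand_sub_gan_integrand_eq hs.ne' hd
  linarith [mul_log_div_sub_sub_nonneg ha hsd, mul_log_div_sub_sub_nonneg hb hsd']

lemma mul_log_add_mul_log_one_sub_eq_iff (ha : 0 ≤ a) (hb : 0 ≤ b) (hd : d ∈ Ioo (0 : ℝ) 1) :
    a * log d + b * log (1 - d) =
        a * log (a / ((a + b) / 2)) + b * log (b / ((a + b) / 2)) - (a + b) * log 2 ↔
      (0 < a + b → d = a / (a + b)) := by
  rcases (add_nonneg ha hb).eq_or_lt with hs | hs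
  · obtain ⟨rfl, rfl⟩ : a = 0 ∧ b = 0 := by constructor <;> linarith
    simp
  have hsd : 0 < (a + b) * d := mul_pos hs hd.1
  have hsd' : 0 < (a + b) * (1 - d) := mul_pos hs (sub_pos.2 hd.2)
  rw [eq_comm, ← sub_eq_zero, js_integrand_sub_gan_integrand_eq hs.ne' hd,
    add_eq_zero_iff_of_nonneg (mul_log_div_sub_sub_nonneg ha hsd)
      (mul_log_div_sub_sub_nonneg hb hsd'),
    mul_log_div_sub_sub_eq_zero_iff ha hsd, mul_log_div_sub_sub_eq_zero_iff hb hsd',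
    eq_div_iff hs.ne', imp_iff_right hs]
  constructor
  · rintro ⟨h, -⟩
    linarith
  · intro h
    constructor <;> linarith

end JensenShannonIntegrand

theorem gan_value_upper_bound_general {X : Type*} [MeasurableSpace X] (μ : Measure X)
    (p g D : X → ℝ)
    (hp_nonneg : ∀ x, 0 ≤ p x) (hg_nonneg : ∀ x, 0 ≤ g x)
    (hp_prob : ∫ x, p x ∂μ = 1) (hg_prob : ∫ x, g x ∂μ = 1)
    (hD : ∀ x, D x ∈ Ioo (0:ℝ) 1)
    (hV1 : Integrable (fun x => p x * Real.log (D x)) μ)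
    (hV2 : Integrable (fun x => g x * Real.log (1 - D x)) μ)
    (hKL1 : Integrable (fun x => p x * Real.log (p x / ((p x + g x) / 2))) μ)
    (hKL2 : Integrable (fun x => g x * Real.log (g x / ((p x + g x) / 2))) μ) :
    ((∫ x, p x * Real.log (D x) ∂μ) + (∫ x, g x * Real.log (1 - D x) ∂μ) ≤
      2 * ((1/2) * ∫ x, p x * Real.log (p x / ((p x + g x) / 2)) ∂μ +
           (1/2) * ∫ x, g x * Real.log (g x / ((p x + g x) / 2)) ∂μ)
        - 2 * Real.log 2) ∧
    (((∫ x, p x * Real.log (D x) ∂μ) + (∫ x, g x * Real.log (1 - D x) ∂μ) =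
      2 * ((1/2) * ∫ x, p x * Real.log (p x / ((p x + g x) / 2)) ∂μ +
           (1/2) * ∫ x, g x * Real.log (g x / ((p x + g x) / 2)) ∂μ)
        - 2 * Real.log 2) ↔
      (∀ᵐ x ∂μ, 0 < p x + g x → D x = p x / (p x + g x))) := by
  have hp_int : Integrable p μ := Integrable.of_integral_ne_zero (by simp [hp_prob])
  have hg_int : Integrable g μ := Integrable.of_integral_ne_zero (by simp [hg_prob])
  set V : X → ℝ := fun x => p x * log (D x) + g x * log (1 - D x)
  set J : X → ℝ := fun x => p x * log (p x / ((p x + g x) / 2))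
    + g x * log (g x / ((p x + g x) / 2)) - (p x + g x) * log 2
  have hV_int : Integrable V μ := hV1.add hV2
  have hKL_int : Integrable (fun x => p x * log (p x / ((p x + g x) / 2))
      + g x * log (g x / ((p x + g x) / 2))) μ := hKL1.add hKL2
  have hpg_int : Integrable (fun x => (p x + g x) * log 2) μ := (hp_int.add hg_int).mul_const _
  have hJ_int : Integrable J μ := hKL_int.sub hpg_int
  have hV : ∫ x, V x ∂μ = (∫ x, p x * log (D x) ∂μ) + ∫ x, g x * log (1 - D x) ∂μ :=
    integral_add hV1 hV2
  have hJ : ∫ x, J x ∂μ = (∫ x, p x * log (p x / ((p x + g x) / 2)) ∂μ)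
      + (∫ x, g x * log (g x / ((p x + g x) / 2)) ∂μ) - 2 * log 2 := by
    rw [integral_sub hKL_int hpg_int, integral_add hKL1 hKL2,
      integral_mul_const, integral_add hp_int hg_int, hp_prob, hg_prob]
    ring
  have hVJ : ∀ x, V x ≤ J x := fun x =>
    mul_log_add_mul_log_one_sub_le (hp_nonneg x) (hg_nonneg x) (hD x)
  have hmono := integral_mono hV_int hJ_int hVJ
  refine ⟨by linarith, ?_⟩
  calc _ ↔ ∫ x, V x ∂μ = ∫ x, J x ∂μ := by rw [hV, hJ]; constructor <;> intro h <;> linarith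
    _ ↔ V =ᵐ[μ] J := integral_eq_iff_of_ae_le hV_int hJ_int (ae_of_all μ hVJ)
    _ ↔ _ := Filter.eventually_congr <| ae_of_all μ fun x =>
      mul_log_add_mul_log_one_sub_eq_iff (hp_nonneg x) (hg_nonneg x) (hD x)

/-- GAN value function upper bound: for any discriminator D with values in (0,1),
V(D) ≤ 2·D_JS(p‖g) - 2 log 2, with equality iff D = p/(p+g) a.e. (on the
support of p+g). -/
theorem gan_value_upper_bound {X : Type*} [MeasurableSpace X] (μ : Measure X)
    [SigmaFinite μ]
    (p g D : X → ℝ)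
    (hp_meas : Measurable p) (hg_meas : Measurable g) (hD_meas : Measurable D)
    (hp_nonneg : ∀ x, 0 ≤ p x) (hg_nonneg : ∀ x, 0 ≤ g x)
    (hp_prob : ∫ x, p x ∂μ = 1) (hg_prob : ∫ x, g x ∂μ = 1)
    (hD : ∀ x, D x ∈ Ioo (0:ℝ) 1)
    (hV1 : Integrable (fun x => p x * Real.log (D x)) μ)
    (hV2 : Integrable (fun x => g x * Real.log (1 - D x)) μ)
    (hKL1 : Integrable (fun x => p x * Real.log (p x / ((p x + g x) / 2))) μ)
    (hKL2 : Integrable (fun x => g x * Real.log (g x / ((p x + g x) / 2))) μ) :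
    ((∫ x, p x * Real.log (D x) ∂μ) + (∫ x, g x * Real.log (1 - D x) ∂μ) ≤
      2 * ((1/2) * ∫ x, p x * Real.log (p x / ((p x + g x) / 2)) ∂μ +
           (1/2) * ∫ x, g x * Real.log (g x / ((p x + g x) / 2)) ∂μ)
        - 2 * Real.log 2) ∧
    (((∫ x, p x * Real.log (D x) ∂μ) + (∫ x, g x * Real.log (1 - D x) ∂μ) =
      2 * ((1/2) * ∫ x, p x * Real.log (p x / ((p x + g x) / 2)) ∂μ +
           (1/2) * ∫ x, g x * Real.log (g x / ((p x + g x) / 2)) ∂μ)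
        - 2 * Real.log 2) ↔
      (∀ᵐ x ∂μ, 0 < p x + g x → D x = p x / (p x + g x))) :=
  gan_value_upper_bound_general μ p g D hp_nonneg hg_nonneg hp_prob hg_prob hD hV1 hV2 hKL1 hKL2
end

section
/- (Value of optimal discriminator) With the optimal discriminator D*(x) = p(x)/(p(x)+g(x)), the GAN value function equals V(D*) = 2 D_JS(p ‖ g) - 2 log 2. -/
/-! Halving the denominator adds `log 2` to the logarithm, so each Kullback–Leibler term against the
mixture `(p + g) / 2` exceeds the corresponding term of `V(D*)` by `log 2` times the total mass, which
is `1`. -/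

open MeasureTheory Real

/-- Where `a + b = 0` both divisions are junk (`x / 0 = 0`); nonnegativity forces `a = 0` there. -/
lemma mul_log_div_add_div_two {a b : ℝ} (ha : 0 ≤ a) (hb : 0 ≤ b) :
    a * log (a / ((a + b) / 2)) = a * log (a / (a + b)) + a * log 2 := by
  rcases ha.eq_or_lt with rfl | ha
  · simp
  have hab : 0 < a + b := by linarith
  rw [div_div_eq_mul_div, mul_div_right_comm, log_mul (div_pos ha hab).ne' two_ne_zero, mul_add]

lemma integral_mul_log_div_add_div_two {X : Type*} [MeasurableSpace X] {μ : Measure X}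
    {p g : X → ℝ} (hp : ∀ x, 0 ≤ p x) (hg : ∀ x, 0 ≤ g x) (hp_int : Integrable p μ)
    (h_int : Integrable (fun x => p x * log (p x / (p x + g x))) μ) :
    ∫ x, p x * log (p x / ((p x + g x) / 2)) ∂μ =
      (∫ x, p x * log (p x / (p x + g x)) ∂μ) + (∫ x, p x ∂μ) * log 2 := by
  simp_rw [mul_log_div_add_div_two (hp _) (hg _)]
  rw [integral_add h_int (hp_int.mul_const _), integral_mul_const]

theorem gan_value_optimal_discriminator_general {X : Type*} [MeasurableSpace X]
    (μ : Measure X)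
    (p g : X → ℝ)
    (hp_nonneg : ∀ x, 0 ≤ p x) (hg_nonneg : ∀ x, 0 ≤ g x)
    (hp_prob : ∫ x, p x ∂μ = 1) (hg_prob : ∫ x, g x ∂μ = 1)
    (hV1 : Integrable (fun x => p x * Real.log (p x / (p x + g x))) μ)
    (hV2 : Integrable (fun x => g x * Real.log (g x / (p x + g x))) μ) :
    (∫ x, p x * Real.log (p x / (p x + g x)) ∂μ) +
      (∫ x, g x * Real.log (g x / (p x + g x)) ∂μ) =
    2 * ((1/2) * ∫ x, p x * Real.log (p x / ((p x + g x) / 2)) ∂μ +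
         (1/2) * ∫ x, g x * Real.log (g x / ((p x + g x) / 2)) ∂μ)
      - 2 * Real.log 2 := by
  have hKL_p := integral_mul_log_div_add_div_two hp_nonneg hg_nonneg
    (integrable_of_integral_eq_one hp_prob) hV1
  have hKL_g := integral_mul_log_div_add_div_two hg_nonneg hp_nonneg
    (integrable_of_integral_eq_one hg_prob) (by simpa only [add_comm (p _)] using hV2)
  simp only [add_comm (g _) (p _)] at hKL_g
  rw [hKL_p, hKL_g, hp_prob, hg_prob]
  ring

/-- Value of the optimal discriminator D*(x) = p(x)/(p(x)+g(x)):
V(D*) = 2·D_JS(p‖g) - 2 log 2. -/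
theorem gan_value_optimal_discriminator {X : Type*} [MeasurableSpace X]
    (μ : Measure X) [SigmaFinite μ]
    (p g : X → ℝ)
    (hp_meas : Measurable p) (hg_meas : Measurable g)
    (hp_nonneg : ∀ x, 0 ≤ p x) (hg_nonneg : ∀ x, 0 ≤ g x)
    (hp_prob : ∫ x, p x ∂μ = 1) (hg_prob : ∫ x, g x ∂μ = 1)
    (hV1 : Integrable (fun x => p x * Real.log (p x / (p x + g x))) μ)
    (hV2 : Integrable (fun x => g x * Real.log (g x / (p x + g x))) μ)
    (hKL1 : Integrable (fun x => p x * Real.log (p x / ((p x + g x) / 2))) μ)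
    (hKL2 : Integrable (fun x => g x * Real.log (g x / ((p x + g x) / 2))) μ) :
    (∫ x, p x * Real.log (p x / (p x + g x)) ∂μ) +
      (∫ x, g x * Real.log (g x / (p x + g x)) ∂μ) =
    2 * ((1/2) * ∫ x, p x * Real.log (p x / ((p x + g x) / 2)) ∂μ +
         (1/2) * ∫ x, g x * Real.log (g x / ((p x + g x) / 2)) ∂μ)
      - 2 * Real.log 2 :=
  gan_value_optimal_discriminator_general μ p g hp_nonneg hg_nonneg hp_prob hg_prob hV1 hV2
end
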